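/- For every good encoding ⟦·⟧ from π_mix into π_a and Q ≔ P | P with P ≔ (ā + a) | (b̄ + b.✓): every T ∈ π_a with ⟦Q⟧ ⟹ T satisfies T ⇓. -/

import Mathlib

set_option maxHeartbeats 1000000

/-! # Common definitions: the π-calculus with mixed choice (π_mix) and the
asynchronous π-calculus (π_a), their structural congruence and reduction
semantics, symmetric networks and symmetric executions, contexts, and
Gorla's quality criteria for encodings. -/

/-- Names. -/
abbrev Name : Type := ℕ

/-- The single-name substitution `{m/n}` mapping `n` to `m` and every other
name to itself. -/
def rename (n m : Name) : Name → Name := fun k => if k = n then m else k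

/-! ## The asynchronous π-calculus π_a -/

/-- Processes of the asynchronous π-calculus π_a:
`P ::= (νn)P | P₁ | P₂ | !P | 0 | ȳ⟨z⟩ | y(x).P | [a=b]P | ✓`. -/
inductive PiA : Type
  | nil : PiA
  | res : Name → PiA → PiA
  | par : PiA → PiA → PiA
  | repl : PiA → PiA
  | out : Name → Name → PiA
  | inp : Name → Name → PiA → PiA
  | mtch : Name → Name → PiA → PiA
  | succ : PiA
  deriving DecidableEq

namespace PiA

/-- Application of a substitution to a π_a process. -/
def subst (σ : Name → Name) : PiA → PiA
  | nil => nil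
  | res n P => res (σ n) (subst σ P)
  | par P Q => par (subst σ P) (subst σ Q)
  | repl P => repl (subst σ P)
  | out y z => out (σ y) (σ z)
  | inp y x P => inp (σ y) (σ x) (subst σ P)
  | mtch a b P => mtch (σ a) (σ b) (subst σ P)
  | succ => succ

/-- All names of a π_a process. -/
def names : PiA → Finset Name
  | nil => ∅
  | res n P => insert n (names P)
  | par P Q => names P ∪ names Q
  | repl P => names P
  | out y z => {y, z}
  | inp y x P => insert y (insert x (names P))
  | mtch a b P => insert a (insert b (names P))
  | succ => ∅

/-- Free names of a π_a process. -/
def fn : PiA → Finset Name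
  | nil => ∅
  | res n P => (fn P).erase n
  | par P Q => fn P ∪ fn Q
  | repl P => fn P
  | out y z => {y, z}
  | inp y x P => insert y ((fn P).erase x)
  | mtch a b P => insert a (insert b (fn P))
  | succ => ∅

/-- Structural congruence of π_a: the least congruence containing
α-conversion and the standard structural axioms. -/
inductive Cong : PiA → PiA → Prop
  | refl (P) : Cong P P
  | symm {P Q} : Cong P Q → Cong Q P
  | trans {P Q R} : Cong P Q → Cong Q R → Cong P R
  | resC (n) {P Q} : Cong P Q → Cong (res n P) (res n Q)
  | parC {P P' Q Q'} : Cong P P' → Cong Q Q' → Cong (par P Q) (par P' Q')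
  | replC {P Q} : Cong P Q → Cong (repl P) (repl Q)
  | inpC (y x) {P Q} : Cong P Q → Cong (inp y x P) (inp y x Q)
  | mtchC (a b) {P Q} : Cong P Q → Cong (mtch a b P) (mtch a b Q)
  | alphaRes {n m : Name} {P} : m ∉ names P →
      Cong (res n P) (res m (subst (rename n m) P))
  | alphaInp {y x x' : Name} {P} : x' ∉ names P →
      Cong (inp y x P) (inp y x' (subst (rename x x') P))
  | parNil (P) : Cong (par P nil) P
  | parComm (P Q) : Cong (par P Q) (par Q P)
  | parAssoc (P Q R) : Cong (par P (par Q R)) (par (par P Q) R)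
  | mtchId (a : Name) (P) : Cong (mtch a a P) P
  | replUnfold (P) : Cong (repl P) (par P (repl P))
  | resNil (n : Name) : Cong (res n nil) nil
  | resSwap (n m : Name) (P) : Cong (res n (res m P)) (res m (res n P))
  | resPar {n : Name} {P} (Q) : n ∉ fn P →
      Cong (par P (res n Q)) (res n (par P Q))

/-- The reduction relation ⟼ of π_a. -/
inductive Step : PiA → PiA → Prop
  | com (y x z : Name) (P) :
      Step (par (inp y x P) (out y z)) (subst (rename x z) P)
  | parS {P P'} (Q) : Step P P' → Step (par P Q) (par P' Q)
  | resS (n : Name) {P P'} : Step P P' → Step (res n P) (res n P')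
  | congS {P P' Q Q'} : Cong P P' → Step P' Q' → Cong Q' Q → Step P Q

/-- The reflexive-transitive closure ⟹ of reduction in π_a. -/
abbrev Steps : PiA → PiA → Prop := Relation.ReflTransGen Step

/-- `P` contains a top-level unguarded occurrence of ✓, i.e. `P ≡ P'' | ✓`. -/
def HasTopSuccess (P : PiA) : Prop := ∃ P'', Cong P (par P'' succ)

/-- `P` may lead to success: `P⇓`. -/
def May (P : PiA) : Prop := ∃ P', Steps P P' ∧ HasTopSuccess P'

/-- `P ⟼^ω`: `P` has an infinite sequence of reduction steps. -/
def Diverges (P : PiA) : Prop :=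
  ∃ seq : ℕ → PiA, seq 0 = P ∧ ∀ i, Step (seq i) (seq (i + 1))

end PiA

/-! ## Networks and symmetric executions in π_a -/

/-- The parallel composition `P₁ | … | Pₙ` of a list of processes. -/
def parList : List PiA → PiA
  | [] => PiA.nil
  | [P] => P
  | P :: Q :: rest => PiA.par P (parList (Q :: rest))

/-- The restriction `(νx̃)P` of a process by a sequence of names. -/
def resList : List Name → PiA → PiA
  | [], P => P
  | n :: ns, P => PiA.res n (resList ns P)

/-- `P` is a symmetric network of degree `n`: `P = (νx̃)(P₁ | … | Pₙ)` where
`Pᵢ = σ^(i-1)(P₁)` for a symmetry relation `σ` with `σⁿ = id`. -/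
def SymNetwork (n : ℕ) (P : PiA) : Prop :=
  ∃ (xs : List Name) (Ps : List PiA) (σ : Name → Name),
    Ps.length = n ∧ σ^[n] = id ∧
    (∀ i < n, Ps.getD i PiA.nil = PiA.subst (σ^[i]) (Ps.getD 0 PiA.nil)) ∧
    P = resList xs (parList Ps)

/-- `seq` (of length `len`, `none` meaning infinite) is a symmetric execution
of degree `n`: it starts at a symmetric network of degree `n`, returns to a
symmetric network of degree `n` after every `n`-th step, and is either
infinite or terminates in a symmetric network of degree `n`. -/
def IsSymExecution (n : ℕ) (seq : ℕ → PiA) (len : Option ℕ) : Prop :=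
  SymNetwork n (seq 0) ∧
  match len with
  | none =>
      (∀ i, PiA.Step (seq i) (seq (i + 1))) ∧
      (∀ k, SymNetwork n (seq (n * k)))
  | some m =>
      (∀ i < m, PiA.Step (seq i) (seq (i + 1))) ∧
      (∀ T, ¬ PiA.Step (seq m) T) ∧
      (∀ k, n * k ≤ m → SymNetwork n (seq (n * k))) ∧
      SymNetwork n (seq m)

/-! ## The π-calculus with mixed choice π_mix -/

/-- Prefixes (guards) `μ ::= y(x) | ȳ⟨z⟩`. -/
inductive Guard : Type
  | inp : Name → Name → Guard
  | out : Name → Name → Guard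
  deriving DecidableEq

/-- Application of a substitution to a guard. -/
def Guard.subst (σ : Name → Name) : Guard → Guard
  | .inp y x => .inp (σ y) (σ x)
  | .out y z => .out (σ y) (σ z)

/-- Processes of π_mix:
`P ::= (νn)P | P₁ | P₂ | !P | Σ_{i∈I} μᵢ.Pᵢ | ✓`; `0` is the empty sum. -/
inductive PiM : Type
  | res : Name → PiM → PiM
  | par : PiM → PiM → PiM
  | repl : PiM → PiM
  | sum : List (Guard × PiM) → PiM
  | succ : PiM

/-- The empty sum `0` of π_mix. -/
def zeroM : PiM := .sum []

mutual
  /-- Application of a substitution to a π_mix process. -/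
  def substM (σ : Name → Name) : PiM → PiM
    | .res n P => .res (σ n) (substM σ P)
    | .par P Q => .par (substM σ P) (substM σ Q)
    | .repl P => .repl (substM σ P)
    | .sum gs => .sum (substSummands σ gs)
    | .succ => .succ
  /-- Application of a substitution to a list of summands. -/
  def substSummands (σ : Name → Name) :
      List (Guard × PiM) → List (Guard × PiM)
    | [] => []
    | (g, P) :: rest => (g.subst σ, substM σ P) :: substSummands σ rest
end

mutual
  /-- All names of a π_mix process. -/
  def namesM : PiM → Finset Name
    | .res n P => insert n (namesM P)
    | .par P Q => namesM P ∪ namesM Q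
    | .repl P => namesM P
    | .sum gs => namesSummands gs
    | .succ => ∅
  /-- All names of a list of summands. -/
  def namesSummands : List (Guard × PiM) → Finset Name
    | [] => ∅
    | (.inp y x, P) :: rest =>
        insert y (insert x (namesM P)) ∪ namesSummands rest
    | (.out y z, P) :: rest =>
        insert y (insert z (namesM P)) ∪ namesSummands rest
end

mutual
  /-- Free names of a π_mix process. -/
  def fnM : PiM → Finset Name
    | .res n P => (fnM P).erase n
    | .par P Q => fnM P ∪ fnM Q
    | .repl P => fnM P
    | .sum gs => fnSummands gs
    | .succ => ∅
  /-- Free names of a list of summands. -/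
  def fnSummands : List (Guard × PiM) → Finset Name
    | [] => ∅
    | (.inp y x, P) :: rest => insert y ((fnM P).erase x) ∪ fnSummands rest
    | (.out y z, P) :: rest => insert y (insert z (fnM P)) ∪ fnSummands rest
end

/-- Structural congruence of π_mix. -/
inductive CongM : PiM → PiM → Prop
  | refl (P) : CongM P P
  | symm {P Q} : CongM P Q → CongM Q P
  | trans {P Q R} : CongM P Q → CongM Q R → CongM P R
  | resC (n : Name) {P Q} : CongM P Q → CongM (.res n P) (.res n Q)
  | parC {P P' Q Q'} : CongM P P' → CongM Q Q' → CongM (.par P Q) (.par P' Q')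
  | replC {P Q} : CongM P Q → CongM (.repl P) (.repl Q)
  | alphaRes {n m : Name} {P} : m ∉ namesM P →
      CongM (.res n P) (.res m (substM (rename n m) P))
  | alphaInp {gs₁ gs₂ : List (Guard × PiM)} {y x x' : Name} {P} :
      x' ∉ namesM P →
      CongM (.sum (gs₁ ++ (Guard.inp y x, P) :: gs₂))
            (.sum (gs₁ ++ (Guard.inp y x', substM (rename x x') P) :: gs₂))
  | sumPerm {gs gs' : List (Guard × PiM)} : gs.Perm gs' →
      CongM (.sum gs) (.sum gs')
  | parNil (P) : CongM (.par P zeroM) P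
  | parComm (P Q) : CongM (.par P Q) (.par Q P)
  | parAssoc (P Q R) : CongM (.par P (.par Q R)) (.par (.par P Q) R)
  | replUnfold (P) : CongM (.repl P) (.par P (.repl P))
  | resNil (n : Name) : CongM (.res n zeroM) zeroM
  | resSwap (n m : Name) (P) : CongM (.res n (.res m P)) (.res m (.res n P))
  | resPar {n : Name} {P} (Q) : n ∉ fnM P →
      CongM (.par P (.res n Q)) (.res n (.par P Q))

/-- The reduction relation ⟼ of π_mix:
`(…+ y(x).P +…) | (…+ ȳ⟨z⟩.Q +…) ⟼ P{z/x} | Q`, closed under parallel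
composition, restriction and structural congruence. -/
inductive StepM : PiM → PiM → Prop
  | com {gs₁ gs₂ : List (Guard × PiM)} {y x z : Name} {P Q : PiM} :
      (Guard.inp y x, P) ∈ gs₁ → (Guard.out y z, Q) ∈ gs₂ →
      StepM (.par (.sum gs₁) (.sum gs₂)) (.par (substM (rename x z) P) Q)
  | parS {P P'} (Q) : StepM P P' → StepM (.par P Q) (.par P' Q)
  | resS (n : Name) {P P'} : StepM P P' → StepM (.res n P) (.res n P')
  | congS {P P' Q Q'} : CongM P P' → StepM P' Q' → CongM Q' Q → StepM P Q

/-- The reflexive-transitive closure ⟹ of reduction in π_mix. -/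
abbrev StepsM : PiM → PiM → Prop := Relation.ReflTransGen StepM

/-- `S` contains a top-level unguarded occurrence of ✓, i.e. `S ≡ S'' | ✓`. -/
def HasTopSuccessM (S : PiM) : Prop := ∃ S'', CongM S (.par S'' .succ)

/-- `S` may lead to success: `S⇓`. -/
def MayM (S : PiM) : Prop := ∃ S', StepsM S S' ∧ HasTopSuccessM S'

/-- `S ⟼^ω`: `S` has an infinite sequence of reduction steps. -/
def DivergesM (S : PiM) : Prop :=
  ∃ seq : ℕ → PiM, seq 0 = S ∧ ∀ i, StepM (seq i) (seq (i + 1))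

/-- `seq` (of length `len`, `none` meaning infinite) is a maximal execution:
it is either infinite or terminates in a process with no reduction step. -/
def IsMaxExecutionM (seq : ℕ → PiM) (len : Option ℕ) : Prop :=
  match len with
  | none => ∀ i, StepM (seq i) (seq (i + 1))
  | some m => (∀ i < m, StepM (seq i) (seq (i + 1))) ∧ ∀ T, ¬ StepM (seq m) T

/-! ## α-equivalence on π_a -/

/-- α-conversion ≡α on π_a: the least congruence allowing renaming of
bound names (avoiding name clashes). -/
inductive AlphaA : PiA → PiA → Prop
  | refl (P) : AlphaA P P
  | symm {P Q} : AlphaA P Q → AlphaA Q P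
  | trans {P Q R} : AlphaA P Q → AlphaA Q R → AlphaA P R
  | resC (n : Name) {P Q} : AlphaA P Q → AlphaA (.res n P) (.res n Q)
  | parC {P P' Q Q'} : AlphaA P P' → AlphaA Q Q' → AlphaA (.par P Q) (.par P' Q')
  | replC {P Q} : AlphaA P Q → AlphaA (.repl P) (.repl Q)
  | inpC (y x : Name) {P Q} : AlphaA P Q → AlphaA (.inp y x P) (.inp y x Q)
  | mtchC (a b : Name) {P Q} : AlphaA P Q → AlphaA (.mtch a b P) (.mtch a b Q)
  | alphaRes {n m : Name} {P} : m ∉ PiA.names P →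
      AlphaA (.res n P) (.res m (PiA.subst (rename n m) P))
  | alphaInp {y x x' : Name} {P} : x' ∉ PiA.names P →
      AlphaA (.inp y x P) (.inp y x' (PiA.subst (rename x x') P))

/-! ## Contexts of π_a -/

/-- `k`-ary contexts of π_a: π_a-terms with holes `·ᵢ`, `i : Fin k`. -/
inductive CtxA : ℕ → Type
  | hole {k} : Fin k → CtxA k
  | nil {k} : CtxA k
  | res {k} : Name → CtxA k → CtxA k
  | par {k} : CtxA k → CtxA k → CtxA k
  | repl {k} : CtxA k → CtxA k
  | out {k} : Name → Name → CtxA k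
  | inp {k} : Name → Name → CtxA k → CtxA k
  | mtch {k} : Name → Name → CtxA k → CtxA k
  | succ {k} : CtxA k

/-- Filling the holes of a context with processes. -/
def CtxA.fill {k : ℕ} : CtxA k → (Fin k → PiA) → PiA
  | .hole i, f => f i
  | .nil, _ => .nil
  | .res n C, f => .res n (C.fill f)
  | .par C D, f => .par (C.fill f) (D.fill f)
  | .repl C, f => .repl (C.fill f)
  | .out y z, _ => .out y z
  | .inp y x C, f => .inp y x (C.fill f)
  | .mtch a b C, f => .mtch a b (C.fill f)
  | .succ, _ => .succ

/-- The number of occurrences of hole `·ᵢ` in a context. -/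
def CtxA.holeCount {k : ℕ} : CtxA k → Fin k → ℕ
  | .hole i, j => if i = j then 1 else 0
  | .nil, _ => 0
  | .res _ C, j => C.holeCount j
  | .par C D, j => C.holeCount j + D.holeCount j
  | .repl C, j => C.holeCount j
  | .out _ _, _ => 0
  | .inp _ _ C, j => C.holeCount j
  | .mtch _ _ C, j => C.holeCount j
  | .succ, _ => 0

/-! ## Operators of π_mix -/

/-- The operators of π_mix: restriction, parallel composition, replication,
a sum operator for every finite list of prefixes, and ✓. -/
inductive MixOp : Type
  | res : Name → MixOp
  | par : MixOp
  | repl : MixOp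
  | sum : List Guard → MixOp
  | succ : MixOp

/-- The arity of a π_mix operator. -/
def MixOp.arity : MixOp → ℕ
  | .res _ => 1
  | .par => 2
  | .repl => 1
  | .sum gs => gs.length
  | .succ => 0

/-- Applying a π_mix operator to arguments. -/
def MixOp.apply : (op : MixOp) → (Fin op.arity → PiM) → PiM
  | .res n, f => .res n (f ⟨0, by simp [MixOp.arity]⟩)
  | .par, f => .par (f ⟨0, by simp [MixOp.arity]⟩) (f ⟨1, by simp [MixOp.arity]⟩)
  | .repl, f => .repl (f ⟨0, by simp [MixOp.arity]⟩)
  | .sum gs, f => .sum (List.ofFn fun i : Fin gs.length => (gs.get i, f i))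
  | .succ, _ => .succ

/-! ## Quality criteria for encodings (Gorla) -/

/-- Criterion 1 (Compositionality): for every operator `op` of π_mix and
every set of names `N` there is a context `C_op^N` such that
`⟦op(S₁,…,S_k)⟧ = C_op^N(⟦S₁⟧,…,⟦S_k⟧)` whenever `fn(S₁) ∪ … ∪ fn(S_k) = N`. -/
def Compositional (enc : PiM → PiA) : Prop :=
  ∀ (op : MixOp) (N : Finset Name), ∃ C : CtxA op.arity,
    ∀ f : Fin op.arity → PiM,
      (Finset.univ.biUnion fun i => fnM (f i)) = N →
      enc (op.apply f) = C.fill (fun i => enc (f i))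

/-- A renaming policy keeps distinct names distinct:
`n ≠ m` implies `φ(n) ∩ φ(m) = ∅`. -/
def PolicyOK (φ : Name → List Name) : Prop :=
  ∀ n m : Name, n ≠ m → ∀ x ∈ φ n, x ∉ φ m

/-- Criterion 2 (Name invariance) w.r.t. a renaming policy `φ`:
`⟦σ(S)⟧ ≡α σ'(⟦S⟧)` if `σ` is injective and `⟦σ(S)⟧ ≍ σ'(⟦S⟧)` otherwise,
where `σ'` is such that `φ(σ(a)) = σ'(φ(a))` for every name `a`. -/
def NameInvariant (enc : PiM → PiA) (equiv : PiA → PiA → Prop)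
    (φ : Name → List Name) : Prop :=
  ∀ (S : PiM) (σ : Name → Name), ∃ σ' : Name → Name,
    (∀ a : Name, φ (σ a) = (φ a).map σ') ∧
    (Function.Injective σ →
      AlphaA (enc (substM σ S)) (PiA.subst σ' (enc S))) ∧
    (¬ Function.Injective σ →
      equiv (enc (substM σ S)) (PiA.subst σ' (enc S)))

/-- Operational completeness: `S ⟹ S'` implies `⟦S⟧ ⟹ ≍ ⟦S'⟧`. -/
def OperationallyComplete (enc : PiM → PiA) (equiv : PiA → PiA → Prop) : Prop :=
  ∀ S S', StepsM S S' → ∃ T, PiA.Steps (enc S) T ∧ equiv T (enc S')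

/-- Operational soundness: `⟦S⟧ ⟹ T` implies `S ⟹ S'` and `T ⟹ ≍ ⟦S'⟧`
for some `S'`. -/
def OperationallySound (enc : PiM → PiA) (equiv : PiA → PiA → Prop) : Prop :=
  ∀ S T, PiA.Steps (enc S) T →
    ∃ S' T', StepsM S S' ∧ PiA.Steps T T' ∧ equiv T' (enc S')

/-- Criterion 4 (Divergence reflection): `⟦S⟧ ⟼^ω` implies `S ⟼^ω`. -/
def DivergenceReflecting (enc : PiM → PiA) : Prop :=
  ∀ S, PiA.Diverges (enc S) → DivergesM S

/-- Criterion 5 (Success sensitiveness): `S⇓` iff `⟦S⟧⇓`. -/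
def SuccessSensitive (enc : PiM → PiA) : Prop :=
  ∀ S, MayM S ↔ PiA.May (enc S)

/-- `≍` is success respecting: `P⇓` and `Q⇓̸` imply `P ≭ Q`. -/
def SuccessRespecting (equiv : PiA → PiA → Prop) : Prop :=
  ∀ T₁ T₂, PiA.May T₁ → ¬ PiA.May T₂ → ¬ equiv T₁ T₂

/-- A good encoding from π_mix into π_a w.r.t. a success-respecting
behavioural equivalence `≍` on π_a and a renaming policy `φ`: it is
compositional, name invariant, operationally corresponding, divergence
reflecting and success sensitive. -/
structure GoodEncoding (enc : PiM → PiA) (equiv : PiA → PiA → Prop)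
    (φ : Name → List Name) : Prop where
  equivEquivalence : Equivalence equiv
  successRespecting : SuccessRespecting equiv
  policyOK : PolicyOK φ
  compositional : Compositional enc
  nameInvariant : NameInvariant enc equiv φ
  complete : OperationallyComplete enc equiv
  sound : OperationallySound enc equiv
  divergenceReflecting : DivergenceReflecting enc
  successSensitive : SuccessSensitive enc

/-! ## The concrete counterexample terms (prefixes CCS-like, objects omitted) -/

/-- The sum `ā + a`. -/
def aSum (a : Name) : PiM := .sum [(Guard.out a a, zeroM), (Guard.inp a a, zeroM)]

/-- The sum `b̄ + b.✓`. -/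
def bSum (b : Name) : PiM := .sum [(Guard.out b b, zeroM), (Guard.inp b b, .succ)]

/-- `P ≔ (ā + a) | (b̄ + b.✓)`. -/
def Pterm (a b : Name) : PiM := .par (aSum a) (bSum b)

/-- `Q ≔ P | P`. -/
def Qterm (a b : Name) : PiM := .par (Pterm a b) (Pterm a b)

/-- The sum `ā + b + b.✓`. -/
def rSum1 (a b : Name) : PiM :=
  .sum [(Guard.out a a, zeroM), (Guard.inp b b, zeroM), (Guard.inp b b, .succ)]

/-- The sum `b̄ + a + a.✓`. -/
def rSum2 (a b : Name) : PiM :=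
  .sum [(Guard.out b b, zeroM), (Guard.inp a a, zeroM), (Guard.inp a a, .succ)]

/-- `R ≔ (ā + b + b.✓) | (b̄ + a + a.✓)`. -/
def Rterm (a b : Name) : PiM := .par (rSum1 a b) (rSum2 a b)

/-! Every derivative of `Q` in π_mix can still reach ✓. Three facts about the unguarded sums of a
process are preserved by reduction: all their continuations are `0` or `✓` (the only processes a
communication then creates); no input on the free name `b` continues with `0`; and either `✓` is
unguarded or there are at least two unguarded free sums whose prefixes are all on `b` and which
offer an output and an input continuing with `✓`. A communication on `b` releases `✓`, and one on
another channel cannot consume such a sum. `Q` satisfies all three because `a ≠ b`, and two such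
sums synchronise in one step. Sums are counted in `ℕ∞` (infinitely often under replication), which
makes the counts invariant under structural congruence.

For the encoding: by soundness a derivative `T` of `⟦Q⟧` reduces to some `T' ≍ ⟦S'⟧` with `S'` a
derivative of `Q`; then `S'⇓`, so `⟦S'⟧⇓` by success sensitivity, so `T'⇓` as `≍` respects
success, and `T⇓`. -/

@[elab_as_elim]
theorem PiM.leafSumInduction {motive : PiM → Prop}
    (res : ∀ n P, motive P → motive (.res n P))
    (par : ∀ P Q, motive P → motive Q → motive (.par P Q))
    (repl : ∀ P, motive P → motive (.repl P))
    (sum : ∀ gs, motive (.sum gs))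
    (succ : motive .succ) : ∀ P, motive P
  | .res n P => res n P (leafSumInduction res par repl sum succ P)
  | .par P Q => par P Q (leafSumInduction res par repl sum succ P)
      (leafSumInduction res par repl sum succ Q)
  | .repl P => repl P (leafSumInduction res par repl sum succ P)
  | .sum gs => sum gs
  | .succ => succ

def Guard.subject : Guard → Name
  | .inp y _ => y
  | .out y _ => y

theorem Guard.subject_subst (σ : Name → Name) (g : Guard) :
    (g.subst σ).subject = σ g.subject := by
  cases g <;> rfl

theorem substSummands_eq_map (σ : Name → Name) (gs : List (Guard × PiM)) :
    substSummands σ gs = gs.map fun e => (e.1.subst σ, substM σ e.2) := by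
  induction gs with
  | nil => rfl
  | cons e gs ih => simp [substSummands, ih]

theorem substM_eq_zeroM_iff {σ : Name → Name} {P : PiM} : substM σ P = zeroM ↔ P = zeroM := by
  cases P <;> simp [substM, zeroM, substSummands_eq_map]

theorem substM_eq_succ_iff {σ : Name → Name} {P : PiM} : substM σ P = .succ ↔ P = .succ := by
  cases P <;> simp [substM]

theorem subject_mem_fnSummands {gs : List (Guard × PiM)} {e : Guard × PiM} (he : e ∈ gs) :
    e.1.subject ∈ fnSummands gs := by
  induction gs with
  | nil => simp at he
  | cons e' gs ih =>
    obtain ⟨⟨y, x⟩ | ⟨y, z⟩, P⟩ := e'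
    all_goals
      rcases List.mem_cons.mp he with rfl | he
      · simp [fnSummands, Guard.subject]
      · simp [fnSummands, ih he]

mutual
theorem fnM_subset_namesM : ∀ P : PiM, fnM P ⊆ namesM P
  | .res n P => by
    simpa [fnM, namesM] using (Finset.erase_subset n _).trans
      ((fnM_subset_namesM P).trans (Finset.subset_insert n _))
  | .par P Q => by
    simpa [fnM, namesM] using Finset.union_subset_union (fnM_subset_namesM P) (fnM_subset_namesM Q)
  | .repl P => by simpa [fnM, namesM] using fnM_subset_namesM P
  | .sum gs => by simpa [fnM, namesM] using fnSummands_subset_namesSummands gs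
  | .succ => by simp [fnM, namesM]
theorem fnSummands_subset_namesSummands : ∀ gs : List (Guard × PiM),
    fnSummands gs ⊆ namesSummands gs
  | [] => by simp [fnSummands, namesSummands]
  | (.inp y x, P) :: gs => by
    simp only [fnSummands, namesSummands]
    refine Finset.union_subset_union (Finset.insert_subset_insert y ?_)
      (fnSummands_subset_namesSummands gs)
    exact (Finset.erase_subset x _).trans
      ((fnM_subset_namesM P).trans (Finset.subset_insert x _))
  | (.out y z, P) :: gs => by
    simp only [fnSummands, namesSummands]
    exact Finset.union_subset_union
      (Finset.insert_subset_insert y (Finset.insert_subset_insert z (fnM_subset_namesM P)))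
      (fnSummands_subset_namesSummands gs)
end

theorem rename_eq_iff_of_ne {n m s : Name} (hn : n ≠ s) (hm : m ≠ s) (k : Name) :
    rename n m k = s ↔ k = s := by
  unfold rename
  split_ifs with hk <;> simp_all [eq_comm]

theorem rename_self_ne {s m : Name} (hm : m ≠ s) (k : Name) : rename s m k ≠ s := by
  unfold rename
  split_ifs with hk <;> simp_all

/-- The conditions under which `sumCount s p` is invariant under structural congruence. -/
structure SubjectProperty (s : Name) (p : List (Guard × PiM) → Prop) : Prop where
  exists_subject : ∀ {gs}, p gs → ∃ e ∈ gs, e.1.subject = s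
  substSummands_iff : ∀ {σ : Name → Name}, (∀ k, σ k = s ↔ k = s) →
    ∀ gs, p (substSummands σ gs) ↔ p gs
  alphaInp_iff : ∀ (gs₁ gs₂ : List (Guard × PiM)) (y x x' : Name) (P : PiM) (τ : Name → Name),
    p (gs₁ ++ (.inp y x, P) :: gs₂) ↔ p (gs₁ ++ (.inp y x', substM τ P) :: gs₂)
  perm_iff : ∀ {gs gs'}, gs.Perm gs' → (p gs ↔ p gs')

open Classical in
noncomputable def sumCount (s : Name) (p : List (Guard × PiM) → Prop) : PiM → ℕ∞
  | .res n P => if n = s then 0 else sumCount s p P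
  | .par P Q => sumCount s p P + sumCount s p Q
  | .repl P => ⊤ * sumCount s p P
  | .sum gs => if p gs then 1 else 0
  | .succ => 0

theorem sumCount_sum_congr {s : Name} {p : List (Guard × PiM) → Prop}
    {gs gs' : List (Guard × PiM)} (h : p gs ↔ p gs') :
    sumCount s p (.sum gs) = sumCount s p (.sum gs') := by
  rw [sumCount, sumCount, propext h]

theorem ENat.top_mul_eq_add_top_mul (c : ℕ∞) : ⊤ * c = c + ⊤ * c := by
  rcases eq_or_ne c 0 with rfl | hc
  · simp
  · simp [hc]

namespace SubjectProperty

variable {s : Name} {p : List (Guard × PiM) → Prop}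

theorem not_nil (hp : SubjectProperty s p) : ¬ p [] := fun h => by
  simpa using hp.exists_subject h

theorem sumCount_zeroM (hp : SubjectProperty s p) : sumCount s p zeroM = 0 := by
  simp [sumCount, zeroM, hp.not_nil]

theorem sumCount_eq_zero_of_notMem_fnM (hp : SubjectProperty s p) :
    ∀ P, s ∉ fnM P → sumCount s p P = 0 := by
  intro P
  induction P using PiM.leafSumInduction with
  | res n P ih =>
    intro hs
    by_cases hn : n = s
    · simp [sumCount, hn]
    · simp_all [sumCount, fnM, Finset.mem_erase, Ne.symm hn]
  | par P Q ihP ihQ => intro hs; simp_all [sumCount, fnM]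
  | repl P ih => intro hs; simp_all [sumCount, fnM]
  | sum gs =>
    intro hs
    have : ¬ p gs := fun h => by
      obtain ⟨e, he, rfl⟩ := hp.exists_subject h
      exact hs (by simpa [fnM] using subject_mem_fnSummands he)
    simp [sumCount, this]
  | succ => simp [sumCount]

theorem sumCount_substM (hp : SubjectProperty s p) {σ : Name → Name}
    (hσ : ∀ k, σ k = s ↔ k = s) (P : PiM) : sumCount s p (substM σ P) = sumCount s p P := by
  induction P using PiM.leafSumInduction with
  | sum gs => exact sumCount_sum_congr (hp.substSummands_iff hσ gs)
  | _ => simp [sumCount, substM, *]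

theorem sumCount_substM_eq_zero (hp : SubjectProperty s p) {σ : Name → Name}
    (hσ : ∀ k, σ k ≠ s) (P : PiM) : sumCount s p (substM σ P) = 0 := by
  induction P using PiM.leafSumInduction with
  | sum gs =>
    have : ¬ p (substSummands σ gs) := fun h => by
      obtain ⟨e, he, hs⟩ := hp.exists_subject h
      rw [substSummands_eq_map] at he
      obtain ⟨e', -, rfl⟩ := List.mem_map.mp he
      exact hσ _ (by simpa [Guard.subject_subst] using hs)
    simp [sumCount, substM, this]
  | _ => simp [sumCount, substM, *]

theorem sumCount_alphaRes (hp : SubjectProperty s p) {n m : Name} {P : PiM}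
    (hm : m ∉ namesM P) :
    sumCount s p (.res n P) = sumCount s p (.res m (substM (rename n m) P)) := by
  by_cases hn : n = s <;> by_cases hms : m = s
  · simp [sumCount, hn, hms]
  · subst hn
    simp [sumCount, hms, hp.sumCount_substM_eq_zero (rename_self_ne hms)]
  · subst hms
    simp [sumCount, hn, hp.sumCount_eq_zero_of_notMem_fnM P (fun h => hm (fnM_subset_namesM P h))]
  · simp [sumCount, hn, hms, hp.sumCount_substM (rename_eq_iff_of_ne hn hms)]

theorem sumCount_congr (hp : SubjectProperty s p) {P Q : PiM} (h : CongM P Q) :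
    sumCount s p P = sumCount s p Q := by
  induction h with
  | refl => rfl
  | resSwap => simp only [sumCount]; split_ifs <;> rfl
  | symm _ ih => exact ih.symm
  | trans _ _ ih₁ ih₂ => exact ih₁.trans ih₂
  | resC | parC | replC => simp [sumCount, *]
  | alphaRes hm => exact hp.sumCount_alphaRes hm
  | alphaInp => exact sumCount_sum_congr (hp.alphaInp_iff ..)
  | sumPerm hperm => exact sumCount_sum_congr (hp.perm_iff hperm)
  | parNil | resNil => simp [sumCount, hp.sumCount_zeroM]
  | parComm => exact add_comm _ _
  | parAssoc => exact (add_assoc _ _ _).symm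
  | replUnfold => exact ENat.top_mul_eq_add_top_mul _
  | @resPar n P Q hn =>
    by_cases hns : n = s
    · subst hns
      simp [sumCount, hp.sumCount_eq_zero_of_notMem_fnM P hn]
    · simp [sumCount, hns]

end SubjectProperty

def HasInput (s : Name) (c : PiM) (gs : List (Guard × PiM)) : Prop :=
  ∃ x, (Guard.inp s x, c) ∈ gs

def HasOutput (s : Name) (gs : List (Guard × PiM)) : Prop :=
  ∃ z Q, (Guard.out s z, Q) ∈ gs

def IsSuccessChoice (s : Name) (gs : List (Guard × PiM)) : Prop :=
  (∀ e ∈ gs, e.1.subject = s) ∧ HasInput s .succ gs ∧ HasOutput s gs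

section RenamingFixingSubject

variable {s : Name} {σ : Name → Name}

theorem hasInput_substSummands_iff {c : PiM} (hc : ∀ τ P, substM τ P = c ↔ P = c)
    (hσ : ∀ k, σ k = s ↔ k = s) (gs : List (Guard × PiM)) :
    HasInput s c (substSummands σ gs) ↔ HasInput s c gs := by
  simp only [HasInput, substSummands_eq_map, List.mem_map]
  constructor
  · rintro ⟨x, ⟨⟨_ | _, P⟩, he, heq⟩⟩
    · simp only [Guard.subst, Prod.mk.injEq, Guard.inp.injEq, hσ, hc] at heq
      obtain ⟨⟨rfl, -⟩, rfl⟩ := heq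
      exact ⟨_, he⟩
    · simp [Guard.subst] at heq
  · rintro ⟨x, he⟩
    exact ⟨σ x, _, he, by simp [Guard.subst, (hσ s).mpr rfl, (hc σ c).mpr rfl]⟩

theorem hasOutput_substSummands_iff (hσ : ∀ k, σ k = s ↔ k = s) (gs : List (Guard × PiM)) :
    HasOutput s (substSummands σ gs) ↔ HasOutput s gs := by
  simp only [HasOutput, substSummands_eq_map, List.mem_map]
  constructor
  · rintro ⟨z, Q, ⟨⟨_ | _, P⟩, he, heq⟩⟩
    · simp [Guard.subst] at heq
    · simp only [Guard.subst, Prod.mk.injEq, Guard.out.injEq, hσ] at heq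
      obtain ⟨⟨rfl, -⟩, -⟩ := heq
      exact ⟨_, _, he⟩
  · rintro ⟨z, Q, he⟩
    exact ⟨σ z, substM σ Q, _, he, by simp [Guard.subst, (hσ s).mpr rfl]⟩

end RenamingFixingSubject

theorem hasInput_subjectProperty {s : Name} {c : PiM}
    (hc : ∀ τ P, substM τ P = c ↔ P = c) : SubjectProperty s (HasInput s c) where
  exists_subject := fun ⟨_, he⟩ => ⟨_, he, rfl⟩
  substSummands_iff hσ := hasInput_substSummands_iff hc hσ
  alphaInp_iff gs₁ gs₂ y x x' P τ := by
    simp only [HasInput, List.mem_append, List.mem_cons, Prod.mk.injEq, Guard.inp.injEq]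
    constructor
    · rintro ⟨z, h | ⟨⟨rfl, -⟩, rfl⟩ | h⟩
      · exact ⟨z, .inl h⟩
      · exact ⟨x', .inr (.inl ⟨⟨rfl, rfl⟩, ((hc τ _).mpr rfl).symm⟩)⟩
      · exact ⟨z, .inr (.inr h)⟩
    · rintro ⟨z, h | ⟨⟨rfl, -⟩, h⟩ | h⟩
      · exact ⟨z, .inl h⟩
      · exact ⟨x, .inr (.inl ⟨⟨rfl, rfl⟩, ((hc τ P).mp h.symm).symm⟩)⟩
      · exact ⟨z, .inr (.inr h)⟩
  perm_iff hperm := by simp only [HasInput, hperm.mem_iff]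

theorem isSuccessChoice_subjectProperty {s : Name} : SubjectProperty s (IsSuccessChoice s) where
  exists_subject := fun ⟨hall, ⟨_, he⟩, _⟩ => ⟨_, he, hall _ he⟩
  substSummands_iff {σ} hσ gs := by
    refine and_congr ?_ (and_congr
      (hasInput_substSummands_iff (fun _ _ => substM_eq_succ_iff) hσ gs)
      (hasOutput_substSummands_iff hσ gs))
    simp only [substSummands_eq_map, List.forall_mem_map, Guard.subject_subst, hσ]
  alphaInp_iff gs₁ gs₂ y x x' P τ := by
    refine and_congr ?_ (and_congr
      ((hasInput_subjectProperty fun _ _ => substM_eq_succ_iff).alphaInp_iff ..) ?_)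
    · simp only [List.forall_mem_append, List.forall_mem_cons, Guard.subject]
    · simp [HasOutput]
  perm_iff hperm := by simp only [IsSuccessChoice, HasInput, HasOutput, hperm.mem_iff]

def PiM.IsTrivial (c : PiM) : Prop := c = zeroM ∨ c = .succ

theorem PiM.isTrivial_substM (σ : Name → Name) (c : PiM) :
    (substM σ c).IsTrivial ↔ c.IsTrivial := by
  simp only [PiM.IsTrivial, substM_eq_zeroM_iff, substM_eq_succ_iff]

def TrivialContinuations : PiM → Prop
  | .res _ P => TrivialContinuations P
  | .par P Q => TrivialContinuations P ∧ TrivialContinuations Q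
  | .repl P => TrivialContinuations P
  | .sum gs => ∀ e ∈ gs, e.2.IsTrivial
  | .succ => True

def HasUnguardedSuccess : PiM → Prop
  | .res _ P => HasUnguardedSuccess P
  | .par P Q => HasUnguardedSuccess P ∨ HasUnguardedSuccess Q
  | .repl P => HasUnguardedSuccess P
  | .sum _ => False
  | .succ => True

theorem trivialContinuations_substM (σ : Name → Name) (P : PiM) :
    TrivialContinuations (substM σ P) ↔ TrivialContinuations P := by
  induction P using PiM.leafSumInduction <;>
    simp only [TrivialContinuations, substM, substSummands_eq_map, List.forall_mem_map,
      PiM.isTrivial_substM, *]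

theorem hasUnguardedSuccess_substM (σ : Name → Name) (P : PiM) :
    HasUnguardedSuccess (substM σ P) ↔ HasUnguardedSuccess P := by
  induction P using PiM.leafSumInduction <;> simp [HasUnguardedSuccess, substM, *]

theorem trivialContinuations_congr {P Q : PiM} (h : CongM P Q) :
    TrivialContinuations P ↔ TrivialContinuations Q := by
  induction h with
  | refl => rfl
  | symm _ ih => exact ih.symm
  | trans _ _ ih₁ ih₂ => exact ih₁.trans ih₂
  | alphaRes => exact (trivialContinuations_substM _ _).symm
  | alphaInp =>
    simp only [TrivialContinuations, List.forall_mem_append, List.forall_mem_cons,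
      PiM.isTrivial_substM]
  | sumPerm hperm => simp only [TrivialContinuations, hperm.mem_iff]
  | parComm => exact and_comm
  | parAssoc => exact and_assoc.symm
  | _ => simp_all [TrivialContinuations, zeroM]

theorem hasUnguardedSuccess_congr {P Q : PiM} (h : CongM P Q) :
    HasUnguardedSuccess P ↔ HasUnguardedSuccess Q := by
  induction h with
  | refl => rfl
  | symm _ ih => exact ih.symm
  | trans _ _ ih₁ ih₂ => exact ih₁.trans ih₂
  | alphaRes => exact (hasUnguardedSuccess_substM _ _).symm
  | parComm => exact or_comm
  | parAssoc => exact or_assoc.symm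
  | _ => simp_all [HasUnguardedSuccess, zeroM]

theorem PiM.IsTrivial.substM_eq {c : PiM} (hc : c.IsTrivial) (σ : Name → Name) :
    substM σ c = c := by
  rcases hc with rfl | rfl <;> rfl

theorem PiM.IsTrivial.trivialContinuations {c : PiM} (hc : c.IsTrivial) :
    TrivialContinuations c := by
  rcases hc with rfl | rfl <;> simp [TrivialContinuations, zeroM]

theorem SubjectProperty.sumCount_eq_zero_of_isTrivial {s : Name} {p : List (Guard × PiM) → Prop}
    (hp : SubjectProperty s p) {c : PiM} (hc : c.IsTrivial) : sumCount s p c = 0 := by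
  rcases hc with rfl | rfl
  exacts [hp.sumCount_zeroM, rfl]

theorem StepM.trivialContinuations {P P' : PiM} (h : StepM P P')
    (hP : TrivialContinuations P) : TrivialContinuations P' := by
  induction h with
  | com h₁ h₂ =>
    have hPc := hP.1 _ h₁
    rw [hPc.substM_eq]
    exact ⟨hPc.trivialContinuations, (hP.2 _ h₂).trivialContinuations⟩
  | parS _ _ ih => exact ⟨ih hP.1, hP.2⟩
  | resS _ _ ih => exact ih hP
  | congS hc₁ _ hc₂ ih =>
    exact (trivialContinuations_congr hc₂).mp (ih ((trivialContinuations_congr hc₁).mp hP))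

theorem StepM.hasUnguardedSuccess {P P' : PiM} (h : StepM P P')
    (hP : HasUnguardedSuccess P) : HasUnguardedSuccess P' := by
  induction h with
  | com => exact hP.elim (fun h => h.elim) (fun h => h.elim)
  | parS _ _ ih => exact hP.imp_left ih
  | resS _ _ ih => exact ih hP
  | congS hc₁ _ hc₂ ih =>
    exact (hasUnguardedSuccess_congr hc₂).mp (ih ((hasUnguardedSuccess_congr hc₁).mp hP))

theorem SubjectProperty.sumCount_le_of_stepM {s : Name} {p : List (Guard × PiM) → Prop}
    (hp : SubjectProperty s p) {P P' : PiM} (h : StepM P P') (hP : TrivialContinuations P) :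
    sumCount s p P' ≤ sumCount s p P := by
  induction h with
  | com h₁ h₂ =>
    have hPc := hP.1 _ h₁
    simp [sumCount, hPc.substM_eq, hp.sumCount_eq_zero_of_isTrivial hPc,
      hp.sumCount_eq_zero_of_isTrivial (hP.2 _ h₂)]
  | parS _ _ ih => exact add_le_add (ih hP.1) le_rfl
  | resS n _ ih =>
    simp only [sumCount]
    split_ifs
    exacts [le_rfl, ih hP]
  | congS hc₁ _ hc₂ ih =>
    rw [← hp.sumCount_congr hc₂, hp.sumCount_congr hc₁]
    exact ih ((trivialContinuations_congr hc₁).mp hP)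

theorem StepM.hasUnguardedSuccess_or_sumCount_le {s : Name} {P P' : PiM} (h : StepM P P')
    (hP : TrivialContinuations P) (hnil : sumCount s (HasInput s zeroM) P = 0) :
    HasUnguardedSuccess P' ∨
      sumCount s (IsSuccessChoice s) P ≤ sumCount s (IsSuccessChoice s) P' := by
  induction h with
  | @com gs₁ gs₂ y x z Pc Qc h₁ h₂ =>
    by_cases hy : y = s
    · subst hy
      have hPc : Pc ≠ zeroM := by
        rintro rfl
        have : HasInput y zeroM gs₁ := ⟨x, h₁⟩
        simp [sumCount, this] at hnil
      have hPc : Pc = .succ := (hP.1 _ h₁).resolve_left hPc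
      subst hPc
      exact .inl (.inl trivial)
    · have h₁' : ¬ IsSuccessChoice s gs₁ := fun hc => hy (hc.1 _ h₁)
      have h₂' : ¬ IsSuccessChoice s gs₂ := fun hc => hy (hc.1 _ h₂)
      simp [sumCount, h₁', h₂']
  | parS Q _ ih =>
    rw [sumCount, add_eq_zero] at hnil
    exact (ih hP.1 hnil.1).imp .inl (add_le_add · le_rfl)
  | resS n _ ih =>
    by_cases hn : n = s
    · simp [sumCount, hn]
    · simp only [sumCount, hn, if_false] at hnil ⊢
      exact ih hP hnil
  | congS hc₁ _ hc₂ ih =>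
    have hP' := (trivialContinuations_congr hc₁).mp hP
    rw [(hasInput_subjectProperty fun _ _ => substM_eq_zeroM_iff).sumCount_congr hc₁] at hnil
    rw [isSuccessChoice_subjectProperty.sumCount_congr hc₁,
      ← isSuccessChoice_subjectProperty.sumCount_congr hc₂, ← hasUnguardedSuccess_congr hc₂]
    exact ih hP' hnil

def SucceedsInOneStep (P : PiM) : Prop := ∃ T, StepM P T ∧ HasUnguardedSuccess T

namespace SucceedsInOneStep

theorem of_congM {P P' : PiM} (h : CongM P P') (h' : SucceedsInOneStep P') :
    SucceedsInOneStep P :=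
  let ⟨T, hT, hs⟩ := h'
  ⟨T, .congS h hT (.refl T), hs⟩

theorem par {P : PiM} (h : SucceedsInOneStep P) (Q : PiM) : SucceedsInOneStep (.par P Q) :=
  let ⟨T, hT, hs⟩ := h
  ⟨.par T Q, .parS Q hT, .inl hs⟩

theorem res {P : PiM} (n : Name) (h : SucceedsInOneStep P) : SucceedsInOneStep (.res n P) :=
  let ⟨T, hT, hs⟩ := h
  ⟨.res n T, .resS n hT, hs⟩

end SucceedsInOneStep

def PiM.size : PiM → ℕ
  | .res _ P => P.size + 1
  | .par P Q => P.size + Q.size + 1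
  | .repl P => P.size + 1
  | .sum _ => 0
  | .succ => 0

theorem PiM.size_substM (σ : Name → Name) (P : PiM) : (substM σ P).size = P.size := by
  induction P using PiM.leafSumInduction <;> simp [PiM.size, substM, *]

theorem SubjectProperty.succeedsInOneStep_par {s : Name} {p : List (Guard × PiM) → Prop}
    (hp : SubjectProperty s p) {X : PiM} (hX : ∀ gs, p gs → SucceedsInOneStep (.par X (.sum gs))) :
    ∀ P : PiM, sumCount s p P ≠ 0 → SucceedsInOneStep (.par X P)
  | .res n P, hP => by
    have hn : n ≠ s := fun hn => by simp [sumCount, hn] at hP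
    -- α-convert to a name fresh for `X`, so that the restriction can be extruded over `X`
    obtain ⟨n', hn'⟩ := Infinite.exists_notMem_finset (namesM P ∪ fnM X ∪ {s})
    simp only [Finset.mem_union, Finset.mem_singleton, not_or] at hn'
    obtain ⟨⟨hnP, hnX⟩, hns⟩ := hn'
    have hcount : sumCount s p (substM (rename n n') P) ≠ 0 := by
      rw [hp.sumCount_substM (rename_eq_iff_of_ne hn hns)]
      simpa [sumCount, hn] using hP
    exact .of_congM ((CongM.parC (.refl X) (.alphaRes hnP)).trans (.resPar _ hnX))
      ((hp.succeedsInOneStep_par hX _ hcount).res n')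
  | .par P Q, hPQ => by
    rcases add_ne_zero.mp hPQ with hP | hQ
    · exact .of_congM (.parAssoc X P Q) ((hp.succeedsInOneStep_par hX P hP).par Q)
    · exact .of_congM ((CongM.parC (.refl X) (.parComm P Q)).trans (.parAssoc X Q P))
        ((hp.succeedsInOneStep_par hX Q hQ).par P)
  | .repl P, hP =>
    .of_congM ((CongM.parC (.refl X) (.replUnfold P)).trans (.parAssoc X P _))
      ((hp.succeedsInOneStep_par hX P (right_ne_zero_of_mul hP)).par _)
  | .sum gs, h => hX gs (by_contra fun hgs => h (by simp [sumCount, hgs]))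
  | .succ, h => absurd rfl h
termination_by P => P.size
decreasing_by all_goals simp [PiM.size, PiM.size_substM]

theorem ENat.two_le_or_two_le_or_ne_zero_of_two_le_add {a b : ℕ∞} (h : 2 ≤ a + b) :
    2 ≤ a ∨ 2 ≤ b ∨ (a ≠ 0 ∧ b ≠ 0) := by
  by_contra! h'
  obtain ⟨ha, hb, hab⟩ := h'
  lift a to ℕ using (ha.trans_le le_top).ne
  lift b to ℕ using (hb.trans_le le_top).ne
  norm_cast at *
  omega

theorem succeedsInOneStep_sum_par_sum {s : Name} {gs gs' : List (Guard × PiM)}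
    (h : IsSuccessChoice s gs) (h' : IsSuccessChoice s gs') :
    SucceedsInOneStep (.par (.sum gs) (.sum gs')) :=
  let ⟨_, ⟨_, hx⟩, _⟩ := h
  let ⟨_, _, ⟨_, _, hz⟩⟩ := h'
  ⟨_, .com hx hz, .inl trivial⟩

theorem succeedsInOneStep_par_of_sumCount_ne_zero {s : Name} {P Q : PiM}
    (hP : sumCount s (IsSuccessChoice s) P ≠ 0) (hQ : sumCount s (IsSuccessChoice s) Q ≠ 0) :
    SucceedsInOneStep (.par P Q) :=
  isSuccessChoice_subjectProperty.succeedsInOneStep_par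
    (fun _ hgs => .of_congM (.parComm _ _) (isSuccessChoice_subjectProperty.succeedsInOneStep_par
      (fun _ hgs' => succeedsInOneStep_sum_par_sum hgs hgs') P hP)) Q hQ

theorem succeedsInOneStep_of_two_le_sumCount {s : Name} (P : PiM)
    (hP : 2 ≤ sumCount s (IsSuccessChoice s) P) : SucceedsInOneStep P := by
  induction P using PiM.leafSumInduction with
  | res n P ih =>
    have hn : n ≠ s := fun hn => by simp [sumCount, hn] at hP
    exact (ih (by simpa [sumCount, hn] using hP)).res n
  | par P Q ihP ihQ =>
    rcases ENat.two_le_or_two_le_or_ne_zero_of_two_le_add hP with hP | hQ | ⟨hP, hQ⟩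
    · exact (ihP hP).par Q
    · exact .of_congM (.parComm P Q) ((ihQ hQ).par P)
    · exact succeedsInOneStep_par_of_sumCount_ne_zero hP hQ
  | repl P =>
    have hP : sumCount s (IsSuccessChoice s) P ≠ 0 :=
      right_ne_zero_of_mul (ne_of_gt (lt_of_lt_of_le two_pos hP))
    exact .of_congM ((CongM.replUnfold P).trans
        ((CongM.parC (.refl P) (.replUnfold P)).trans (.parAssoc P P _)))
      ((succeedsInOneStep_par_of_sumCount_ne_zero hP hP).par _)
  | sum gs => simp only [sumCount] at hP; split_ifs at hP <;> norm_num at hP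
  | succ => simp [sumCount] at hP

theorem HasUnguardedSuccess.hasTopSuccessM {P : PiM} (h : HasUnguardedSuccess P) :
    HasTopSuccessM P := by
  induction P using PiM.leafSumInduction with
  | res n P ih =>
    obtain ⟨P', hP⟩ := ih h
    refine ⟨.res n P', (CongM.resC n (hP.trans (.parComm _ _))).trans ?_⟩
    exact (CongM.resPar P' (by simp [fnM])).symm.trans (.parComm _ _)
  | par P Q ihP ihQ =>
    rcases h with h | h
    · obtain ⟨P', hP⟩ := ihP h
      exact ⟨.par Q P',
        (CongM.parC hP (.refl Q)).trans ((CongM.parComm _ _).trans (.parAssoc _ _ _))⟩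
    · obtain ⟨Q', hQ⟩ := ihQ h
      exact ⟨.par P Q', (CongM.parC (.refl P) hQ).trans (.parAssoc _ _ _)⟩
  | repl P ih =>
    obtain ⟨P', hP⟩ := ih h
    exact ⟨.par (.repl P) P', (CongM.replUnfold P).trans
      ((CongM.parC hP (.refl _)).trans ((CongM.parComm _ _).trans (.parAssoc _ _ _)))⟩
  | sum => exact h.elim
  | succ => exact ⟨zeroM, ((CongM.parComm _ _).trans (.parNil _)).symm⟩

def SuccessInvariant (b : Name) (S : PiM) : Prop :=
  TrivialContinuations S ∧ sumCount b (HasInput b zeroM) S = 0 ∧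
    (HasUnguardedSuccess S ∨ 2 ≤ sumCount b (IsSuccessChoice b) S)

theorem SuccessInvariant.stepM {b : Name} {S S' : PiM} (hS : SuccessInvariant b S)
    (h : StepM S S') : SuccessInvariant b S' := by
  obtain ⟨htriv, hnil, hsucc⟩ := hS
  refine ⟨h.trivialContinuations htriv, ?_, ?_⟩
  · refine nonpos_iff_eq_zero.mp (hnil ▸ ?_)
    exact (hasInput_subjectProperty fun _ _ => substM_eq_zeroM_iff).sumCount_le_of_stepM h htriv
  · rcases hsucc with hs | h2
    · exact .inl (h.hasUnguardedSuccess hs)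
    · exact (h.hasUnguardedSuccess_or_sumCount_le htriv hnil).imp_right h2.trans

theorem SuccessInvariant.mayM {b : Name} {S : PiM} (hS : SuccessInvariant b S) : MayM S := by
  rcases hS.2.2 with hs | h2
  · exact ⟨S, .refl, hs.hasTopSuccessM⟩
  · obtain ⟨T, hT, hs⟩ := succeedsInOneStep_of_two_le_sumCount S h2
    exact ⟨T, .single hT, hs.hasTopSuccessM⟩

theorem successInvariant_Qterm {a b : Name} (hab : a ≠ b) : SuccessInvariant b (Qterm a b) := by
  refine ⟨?_, ?_, .inr ?_⟩
  · simp [Qterm, Pterm, aSum, bSum, TrivialContinuations, PiM.IsTrivial]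
  · simp [Qterm, Pterm, aSum, bSum, sumCount, HasInput, zeroM, hab.symm]
  · simp [Qterm, Pterm, aSum, bSum, sumCount, IsSuccessChoice, HasInput, HasOutput,
      Guard.subject, hab, one_add_one_eq_two]

theorem mayM_of_stepsM_Qterm {a b : Name} (hab : a ≠ b) {S : PiM} (h : StepsM (Qterm a b) S) :
    MayM S := by
  suffices SuccessInvariant b S from this.mayM
  induction h with
  | refl => exact successInvariant_Qterm hab
  | tail _ hstep ih => exact ih.stepM hstep

theorem PiA.may_of_steps_of_forall_mayM {enc : PiM → PiA} {equiv : PiA → PiA → Prop}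
    (hsound : OperationallySound enc equiv) (hsens : SuccessSensitive enc)
    (hresp : SuccessRespecting equiv) (hsymm : ∀ {T₁ T₂}, equiv T₁ T₂ → equiv T₂ T₁)
    {S : PiM} (hS : ∀ S', StepsM S S' → MayM S') {T : PiA} (hT : PiA.Steps (enc S) T) :
    PiA.May T := by
  obtain ⟨S', T', hSS', hTT', hequiv⟩ := hsound S T hT
  have hmay : PiA.May (enc S') := (hsens S').mp (hS S' hSS')
  obtain ⟨T'', hT'T'', hsucc⟩ : PiA.May T' :=
    by_contra fun hT' => hresp _ _ hmay hT' (hsymm hequiv)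
  exact ⟨T'', hTT'.trans hT'T'', hsucc⟩

theorem good_encoding_Q_always_reaches_success
    (a b : Name) (hab : a ≠ b)
    (enc : PiM → PiA) (equiv : PiA → PiA → Prop) (φ : Name → List Name)
    (hgood : GoodEncoding enc equiv φ) :
    ∀ T : PiA, PiA.Steps (enc (Qterm a b)) T → PiA.May T := fun _ hT =>
  PiA.may_of_steps_of_forall_mayM hgood.sound hgood.successSensitive hgood.successRespecting
    hgood.equivEquivalence.symm (fun _ => mayM_of_stepsM_Qterm hab) hT
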